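/- Let G be a connected graph with m edges and Perron vector x, let u* be a vertex with maximum entry x_{u*}, U = N(u*), W = V(G)∖(U∪{u*}), U_0 = {u∈U : d_U(u)=0}, U_+ = U∖U_0. If λ(G) > (1 + √(4m−7))/2, then e(W) < e(U_+) − |U_+| + 2. -/

import Mathlib

open Finset

/-- The spectral radius of a finite simple graph: the supremum of the real
spectrum of its adjacency matrix. -/
noncomputable def specRad {V : Type*} [Fintype V] [DecidableEq V] (G : SimpleGraph V) : ℝ :=
  letI := Classical.decRel G.Adj
  sSup (spectrum ℝ (SimpleGraph.adjMatrix ℝ G))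

/-- The fish graph `H(4,3)`: a 4-cycle 0-1-2-3-0 and a triangle 0-4-5 sharing vertex 0. -/
def H43 : SimpleGraph (Fin 6) :=
  SimpleGraph.fromEdgeSet {s(0, 1), s(1, 2), s(2, 3), s(3, 0), s(0, 4), s(4, 5), s(5, 0)}

/-- The bowtie graph `H(3,3)` (also `F₂`): two triangles 0-1-2 and 0-3-4 sharing vertex 0. -/
def H33 : SimpleGraph (Fin 5) :=
  SimpleGraph.fromEdgeSet {s(0, 1), s(1, 2), s(2, 0), s(0, 3), s(3, 4), s(4, 0)}

/-- `G` contains a (not necessarily induced) subgraph isomorphic to `H`. -/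
def HasSubgraphCopy {W V : Type*} (H : SimpleGraph W) (G : SimpleGraph V) : Prop :=
  ∃ f : W → V, Function.Injective f ∧ ∀ ⦃a b⦄, H.Adj a b → G.Adj (f a) (f b)

/-- `G` is `H`-free: it contains no subgraph isomorphic to `H`. -/
def GraphFree {W V : Type*} (H : SimpleGraph W) (G : SimpleGraph V) : Prop :=
  ¬ HasSubgraphCopy H G

/-- The book graph `K₂ ∨ k·K₁`, on vertices `Fin (k+2)`: vertices 0 and 1 form the `K₂`
and are joined to all of the `k` remaining independent vertices. -/
def bookGraph (k : ℕ) : SimpleGraph (Fin (k + 2)) where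
  Adj x y := x ≠ y ∧ (x.val < 2 ∨ y.val < 2)
  symm := ⟨fun _ _ h => ⟨h.1.symm, h.2.symm⟩⟩
  loopless := ⟨fun _ h => h.1 rfl⟩

/-- `S⁻`: the graph obtained from the book graph `K₂ ∨ k·K₁` by deleting one edge
incident to a vertex of degree two (the edge between vertices 1 and 2). -/
def bookMinus (k : ℕ) : SimpleGraph (Fin (k + 2)) where
  Adj x y := x ≠ y ∧ (x.val < 2 ∨ y.val < 2) ∧
    ¬(x.val = 1 ∧ y.val = 2) ∧ ¬(x.val = 2 ∧ y.val = 1)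
  symm := by
    constructor
    rintro x y ⟨h1, h2, h3, h4⟩
    exact ⟨h1.symm, h2.symm, fun h => h4 ⟨h.2, h.1⟩, fun h => h3 ⟨h.2, h.1⟩⟩
  loopless := ⟨fun _ h => h.1 rfl⟩

/-- The graph `K₁ ∨ (K_{1,t} ∪ 2K₁)` on `Fin (t+4)`: vertex 0 is the apex joined to all
other vertices, vertex 1 is the star center joined to the `t` leaves `4, …, t+3`,
and vertices 2, 3 are the two extra vertices (joined only to the apex). -/
def extGraph (t : ℕ) : SimpleGraph (Fin (t + 4)) where
  Adj x y := x ≠ y ∧ (x.val = 0 ∨ y.val = 0 ∨ (x.val = 1 ∧ 4 ≤ y.val) ∨ (y.val = 1 ∧ 4 ≤ x.val))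
  symm := by
    constructor
    rintro x y ⟨h1, h2⟩
    exact ⟨h1.symm, by tauto⟩
  loopless := ⟨fun _ h => h.1 rfl⟩

/-- The star `K_{1,r}` on `Fin (r+1)`, with center 0. -/
def starGraph (r : ℕ) : SimpleGraph (Fin (r + 1)) where
  Adj x y := x ≠ y ∧ (x.val = 0 ∨ y.val = 0)
  symm := ⟨fun _ _ h => ⟨h.1.symm, h.2.symm⟩⟩
  loopless := ⟨fun _ h => h.1 rfl⟩

/-- Membership in the family `𝒢(m, H(4,3))`: `H(4,3)`-free, `m` edges, no isolated vertices. -/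
def memFamily {V : Type*} [Fintype V] [DecidableEq V] (m : ℕ) (G : SimpleGraph V) : Prop :=
  GraphFree H43 G ∧ G.edgeSet.ncard = m ∧ ∀ v : V, ∃ w, G.Adj v w

/-- `e(S)`: the number of edges of `G` with both endpoints in `S`. -/
noncomputable def eIn {V : Type*} (G : SimpleGraph V) (S : Set V) : ℕ :=
  {e ∈ G.edgeSet | ∀ v ∈ e, v ∈ S}.ncard

/-- `e(S,T)`: the number of edges of `G` with one endpoint in `S` and the other in `T`. -/
noncomputable def eBetween {V : Type*} (G : SimpleGraph V) (S T : Set V) : ℕ :=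
  {e ∈ G.edgeSet | ∃ a ∈ S, ∃ b ∈ T, e = s(a, b)}.ncard

/-- `d_S(u)`: the number of neighbours of `u` inside `S`. -/
noncomputable def dIn {V : Type*} (G : SimpleGraph V) (S : Set V) (u : V) : ℕ :=
  (S ∩ G.neighborSet u).ncard

/-- `U = N(u)`. -/
def Uset {V : Type*} (G : SimpleGraph V) (u : V) : Set V := G.neighborSet u

/-- `W = V(G) \ (U ∪ {u})`. -/
def Wset {V : Type*} (G : SimpleGraph V) (u : V) : Set V :=
  Set.univ \ (G.neighborSet u ∪ {u})

/-- `U₀ = {v ∈ U : d_U(v) = 0}`. -/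
noncomputable def U0set {V : Type*} (G : SimpleGraph V) (u : V) : Set V :=
  {v ∈ G.neighborSet u | dIn G (G.neighborSet u) v = 0}

/-- `U₊ = U \ U₀`. -/
noncomputable def Uplusset {V : Type*} (G : SimpleGraph V) (u : V) : Set V :=
  {v ∈ G.neighborSet u | dIn G (G.neighborSet u) v ≠ 0}

/-- `G` attains the maximum spectral radius among all graphs in `𝒢(m, H(4,3))` other than
the book graph `K₂ ∨ ((m-1)/2)·K₁`. -/
def isExtremal {V : Type*} [Fintype V] [DecidableEq V] (m : ℕ) (G : SimpleGraph V) : Prop :=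
  memFamily m G ∧ ¬ Nonempty (G ≃g bookGraph ((m - 1) / 2)) ∧
    ∀ (n : ℕ) (H : SimpleGraph (Fin n)), memFamily m H →
      ¬ Nonempty (H ≃g bookGraph ((m - 1) / 2)) → specRad H ≤ specRad G

/-!
Let `U = N(u*)`, `W` the remaining vertices and `d_U(v) = |U ∩ N(v)|`. Applying the eigenvalue
equation twice at `u*` gives `λ² x_{u*} = |U| x_{u*} + ∑_{v ∈ U} d_U(v) x_v + ∑_{w ∈ W} d_U(w) x_w`,
and `λ x_{u*} = ∑_{v ∈ U} x_v`. Since `x_{u*}` is the largest entry and the vertices of `U₀`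
contribute `-x_v ≤ 0`, this yields `λ² - λ ≤ |U| + 2e(U) - |U₊| + e(U, W)`. Counting edges by the
position of their endpoints, `m = |U| + e(U) + e(U, W) + e(W)`, and `e(U) = e(U₊)`. Finally the
hypothesis on `λ` says exactly that `λ² - λ > m - 2`.
-/

open SimpleGraph

lemma sub_two_lt_sq_sub_self {c t : ℝ} (h : (1 + √(4 * c - 7)) / 2 < t) : c - 2 < t ^ 2 - t := by
  have hpos : 0 < 2 * t - 1 := by linarith [Real.sqrt_nonneg (4 * c - 7)]
  have := (Real.sqrt_lt' hpos).mp (by linarith)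
  nlinarith

lemma eIn_setOf_dIn_ne_zero {V : Type*} [Finite V] (G : SimpleGraph V) (S : Set V) :
    eIn G {v ∈ S | dIn G S v ≠ 0} = eIn G S := by
  unfold eIn
  congr 1
  ext e
  induction e using Sym2.ind with
  | _ a b =>
    simp only [Set.mem_ofPred_eq, mem_edgeSet, Sym2.mem_iff, forall_eq_or_imp, forall_eq]
    refine and_congr_right fun hab => ⟨fun h => ⟨h.1.1, h.2.1⟩, fun h => ?_⟩
    exact ⟨⟨h.1, Set.ncard_ne_zero_of_mem ⟨h.2, hab⟩⟩, h.2, Set.ncard_ne_zero_of_mem ⟨h.1, hab.symm⟩⟩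

section

variable {V : Type*} (G : SimpleGraph V)

lemma eIn_univ : eIn G Set.univ = G.edgeSet.ncard := by
  simp [eIn]

variable [DecidableRel G.Adj]

lemma card_interedges_comm (s t : Finset V) : #(G.interedges s t) = #(G.interedges t s) :=
  have := G.symm
  Rel.card_interedges_comm s t

variable [DecidableEq V]

lemma eIn_coe_eq_card_image_interedges (s : Finset V) :
    eIn G ↑s = #((G.interedges s s).image Sym2.mk.uncurry) := by
  have : {e ∈ G.edgeSet | ∀ v ∈ e, v ∈ (s : Set V)} =
      ↑((G.interedges s s).image Sym2.mk.uncurry) := by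
    ext e
    induction e using Sym2.ind with
    | _ a b =>
      simp only [Set.mem_ofPred_eq, mem_edgeSet, Sym2.mem_iff, forall_eq_or_imp, forall_eq,
        coe_image, Set.mem_image, mem_coe, Prod.exists, mk_mem_interedges_iff]
      constructor
      · rintro ⟨hab, ha, hb⟩
        exact ⟨a, b, ⟨ha, hb, hab⟩, rfl⟩
      · rintro ⟨c, d, ⟨hc, hd, hcd⟩, he⟩
        rcases Sym2.eq_iff.mp he with ⟨rfl, rfl⟩ | ⟨rfl, rfl⟩
        exacts [⟨hcd, hc, hd⟩, ⟨hcd.symm, hd, hc⟩]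
  rw [eIn, this, Set.ncard_coe_finset]

lemma two_mul_card_image_interedges (s : Finset V) :
    2 * #((G.interedges s s).image Sym2.mk.uncurry) = #(G.interedges s s) := by
  conv_rhs => rw [card_eq_sum_card_image Sym2.mk.uncurry (G.interedges s s)]
  rw [sum_const_nat, mul_comm]
  intro e he
  obtain ⟨⟨a, b⟩, hab, rfl⟩ := mem_image.mp he
  rw [mk_mem_interedges_iff] at hab
  have hfiber : {z ∈ G.interedges s s | Sym2.mk.uncurry z = s(a, b)} = {(a, b), (b, a)} := by
    ext ⟨c, d⟩
    simp only [mem_filter, mk_mem_interedges_iff, Function.uncurry_apply_pair, Sym2.eq_iff,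
      mem_insert, mem_singleton, Prod.mk.injEq]
    constructor
    · exact fun h => h.2
    · rintro (⟨rfl, rfl⟩ | ⟨rfl, rfl⟩)
      exacts [⟨hab, .inl ⟨rfl, rfl⟩⟩,
        ⟨⟨hab.2.1, hab.1, hab.2.2.symm⟩, .inr ⟨rfl, rfl⟩⟩]
  rw [Function.uncurry_apply_pair, hfiber, card_pair (by simpa using fun h _ => hab.2.2.ne h)]

lemma two_mul_eIn_coe (s : Finset V) : 2 * eIn G ↑s = #(G.interedges s s) := by
  rw [eIn_coe_eq_card_image_interedges, two_mul_card_image_interedges]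

end

lemma sum_neighborFinset_eq_of_mulVec_eq {V : Type*} [Fintype V] (G : SimpleGraph V)
    [DecidableRel G.Adj] {R : Type*} [NonAssocSemiring R] {x : V → R} {c : R}
    (h : (G.adjMatrix R).mulVec x = c • x) (v : V) :
    ∑ w ∈ G.neighborFinset v, x w = c * x v := by
  rw [← adjMatrix_mulVec_apply, h, Pi.smul_apply, smul_eq_mul]

section

variable {V : Type*} [Fintype V] [DecidableEq V] (G : SimpleGraph V) [DecidableRel G.Adj]

lemma card_interedges_eq_sum (s t : Finset V) :
    #(G.interedges s t) = ∑ a ∈ s, #(t ∩ G.neighborFinset a) := by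
  rw [interedges_def, card_filter, sum_product]
  refine sum_congr rfl fun a _ => ?_
  rw [← card_filter, neighborFinset_eq_filter, ← filter_mem_eq_inter]
  simp

lemma sum_card_inter_neighborFinset_eq_two_mul_eIn (s : Finset V) :
    ∑ v ∈ s, #(s ∩ G.neighborFinset v) = 2 * eIn G ↑s := by
  rw [two_mul_eIn_coe, card_interedges_eq_sum]

lemma card_interedges_union_left {s t : Finset V} (hst : Disjoint s t) (r : Finset V) :
    #(G.interedges (s ∪ t) r) = #(G.interedges s r) + #(G.interedges t r) := by
  simp only [card_interedges_eq_sum, sum_union hst]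

lemma card_interedges_union_right (s : Finset V) {t r : Finset V} (htr : Disjoint t r) :
    #(G.interedges s (t ∪ r)) = #(G.interedges s t) + #(G.interedges s r) := by
  simp only [card_interedges_comm G s, card_interedges_union_left G htr]

lemma eIn_coe_union {s t : Finset V} (hst : Disjoint s t) :
    eIn G ↑(s ∪ t) = eIn G ↑s + eIn G ↑t + #(G.interedges s t) := by
  have h := two_mul_eIn_coe G (s ∪ t)
  rw [card_interedges_union_left G hst, card_interedges_union_right G _ hst,
    card_interedges_union_right G _ hst, card_interedges_comm G t s, ← two_mul_eIn_coe,
    ← two_mul_eIn_coe] at h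
  omega

lemma eIn_coe_singleton (a : V) : eIn G ↑({a} : Finset V) = 0 := by
  simpa [card_interedges_eq_sum] using two_mul_eIn_coe G {a}

lemma dIn_coe (s : Finset V) (v : V) : dIn G ↑s v = #(s ∩ G.neighborFinset v) := by
  rw [dIn, ← Set.ncard_coe_finset, coe_inter, coe_neighborFinset]

def Wfinset (u : V) : Finset V := (insert u (G.neighborFinset u))ᶜ

def Uplusfinset (u : V) : Finset V :=
  {v ∈ G.neighborFinset u | #(G.neighborFinset u ∩ G.neighborFinset v) ≠ 0}

lemma coe_Wfinset (u : V) : ↑(Wfinset G u) = Wset G u := by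
  ext v
  simp [Wfinset, Wset, and_comm]

lemma coe_Uplusfinset (u : V) : ↑(Uplusfinset G u) = Uplusset G u := by
  ext v
  simp [Uplusfinset, Uplusset, ← dIn_coe, coe_neighborFinset]

lemma edgeSet_ncard_eq_card_neighborFinset_add (u : V) :
    G.edgeSet.ncard = #(G.neighborFinset u) + eIn G ↑(G.neighborFinset u)
      + ∑ w ∈ Wfinset G u, #(G.neighborFinset u ∩ G.neighborFinset w)
      + eIn G ↑(Wfinset G u) := by
  set U := G.neighborFinset u
  have hu : Disjoint {u} U := by simp [U]
  have huU : Disjoint ({u} ∪ U) (Wfinset G u) := by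
    rw [← insert_eq]; exact disjoint_compl_right
  have huniv : ({u} ∪ U) ∪ Wfinset G u = univ := by
    rw [← insert_eq]; exact union_compl _
  have hcross : #(G.interedges ({u} ∪ U) (Wfinset G u))
      = ∑ w ∈ Wfinset G u, #(U ∩ G.neighborFinset w) := by
    have hWu : Wfinset G u ∩ U = ∅ := by
      ext; simp [Wfinset, U]
    rw [card_interedges_union_left G hu, card_interedges_comm G U, card_interedges_eq_sum G _ U,
      card_interedges_eq_sum, sum_singleton, hWu, card_empty, zero_add]
  rw [← eIn_univ, ← coe_univ, ← huniv, eIn_coe_union G huU, eIn_coe_union G hu, eIn_coe_singleton,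
    hcross, card_interedges_eq_sum, sum_singleton, inter_self]
  ring

lemma sum_sum_neighborFinset_eq {M : Type*} [AddCommMonoid M] (s : Finset V) (f : V → M) :
    ∑ a ∈ s, ∑ b ∈ G.neighborFinset a, f b = ∑ b, #(s ∩ G.neighborFinset b) • f b := by
  rw [sum_comm' (t' := univ) (s' := fun b => s ∩ G.neighborFinset b)]
  · simp only [sum_const]
  · intro a b
    simp [G.adj_comm]

lemma sum_univ_eq_add_sum_neighborFinset_add_sum_Wfinset {M : Type*} [AddCommMonoid M]
    (u : V) (f : V → M) :
    ∑ b, f b = f u + ∑ b ∈ G.neighborFinset u, f b + ∑ b ∈ Wfinset G u, f b := by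
  rw [← sum_add_sum_compl (insert u (G.neighborFinset u)), sum_insert (by simp), Wfinset]

lemma eigenvalue_sq_sub_self_le {x : V → ℝ} {t : ℝ} (hpos : ∀ v, 0 < x v)
    (heig : ∀ v, ∑ w ∈ G.neighborFinset v, x w = t * x v) {u : V}
    (hmax : ∀ v, x v ≤ x u) :
    t ^ 2 - t ≤ #(G.neighborFinset u)
      + ((∑ v ∈ G.neighborFinset u, (#(G.neighborFinset u ∩ G.neighborFinset v) : ℝ))
        - #(Uplusfinset G u))
      + ∑ w ∈ Wfinset G u, (#(G.neighborFinset u ∩ G.neighborFinset w) : ℝ) := by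
  set U := G.neighborFinset u
  set d : V → ℝ := fun v => #(U ∩ G.neighborFinset v)
  have hU_sum : ∑ v ∈ U, x v = t * x u := heig u
  have hsq : t ^ 2 * x u = #U * x u + ∑ v ∈ U, d v * x v + ∑ w ∈ Wfinset G u, d w * x w :=
    calc t ^ 2 * x u = ∑ v ∈ U, t * x v := by rw [← mul_sum, hU_sum]; ring
      _ = ∑ v ∈ U, ∑ w ∈ G.neighborFinset v, x w := sum_congr rfl fun v _ => (heig v).symm
      _ = ∑ w, d w * x w := by simp only [sum_sum_neighborFinset_eq, nsmul_eq_mul, d]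
      _ = #U * x u + ∑ v ∈ U, d v * x v + ∑ w ∈ Wfinset G u, d w * x w := by
        rw [sum_univ_eq_add_sum_neighborFinset_add_sum_Wfinset G u]
        simp only [d, U, inter_self]
  have hU : ∑ v ∈ U, (d v - 1) * x v ≤ (∑ v ∈ U, d v - #(Uplusfinset G u)) * x u := by
    have hUplus : ∑ v ∈ Uplusfinset G u, d v = ∑ v ∈ U, d v :=
      sum_filter_of_ne fun v _ hv => Nat.cast_ne_zero.mp hv
    calc ∑ v ∈ U, (d v - 1) * x v
        ≤ ∑ v ∈ U, if #(U ∩ G.neighborFinset v) ≠ 0 then (d v - 1) * x u else 0 := by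
          refine sum_le_sum fun v _ => ?_
          split_ifs with h
          · have : 1 ≤ d v := Nat.one_le_cast.mpr (Nat.one_le_iff_ne_zero.mpr h)
            exact mul_le_mul_of_nonneg_left (hmax v) (by linarith)
          · have : d v = 0 := by simp [d, not_not.mp h]
            rw [this, zero_sub, neg_one_mul, neg_nonpos]
            exact (hpos v).le
      _ = ∑ v ∈ Uplusfinset G u, (d v - 1) * x u := by rw [Uplusfinset, sum_filter]
      _ = (∑ v ∈ U, d v - #(Uplusfinset G u)) * x u := by
          rw [← sum_mul, sum_sub_distrib, hUplus, sum_const, nsmul_one]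
  have hW : ∑ w ∈ Wfinset G u, d w * x w ≤ (∑ w ∈ Wfinset G u, d w) * x u := by
    rw [sum_mul]
    exact sum_le_sum fun w _ => mul_le_mul_of_nonneg_left (hmax w) (by positivity)
  have hmul : (t ^ 2 - t) * x u
      ≤ (#U + (∑ v ∈ U, d v - #(Uplusfinset G u)) + ∑ w ∈ Wfinset G u, d w) * x u := by
    have hsub : ∑ v ∈ U, (d v - 1) * x v = ∑ v ∈ U, d v * x v - t * x u := by
      rw [← hU_sum]
      simp only [sub_mul, one_mul, sum_sub_distrib]
    linarith
  exact le_of_mul_le_mul_right hmul (hpos u)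

end

theorem stmt_11_general {V : Type*} [Fintype V] [DecidableEq V] (G : SimpleGraph V)
    [DecidableRel G.Adj]
    (m : ℕ) (hm : G.edgeSet.ncard = m)
    (x : V → ℝ) (hpos : ∀ v, 0 < x v)
    (heig : (SimpleGraph.adjMatrix ℝ G).mulVec x = specRad G • x)
    (ustar : V) (hmaxx : ∀ v, x v ≤ x ustar)
    (hlam : (1 + Real.sqrt (4 * (m : ℝ) - 7)) / 2 < specRad G) :
    (eIn G (Wset G ustar) : ℝ) <
      (eIn G (Uplusset G ustar) : ℝ) - ((Uplusset G ustar).ncard : ℝ) + 2 := by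
  subst hm
  have hspectral :=
    eigenvalue_sq_sub_self_le G hpos (sum_neighborFinset_eq_of_mulVec_eq G heig) hmaxx
  have hedges := edgeSet_ncard_eq_card_neighborFinset_add G ustar
  have hdegrees := sum_card_inter_neighborFinset_eq_two_mul_eIn G (G.neighborFinset ustar)
  have hUplus : eIn G (Uplusset G ustar) = eIn G ↑(G.neighborFinset ustar) := by
    rw [coe_neighborFinset]
    exact eIn_setOf_dIn_ne_zero G _
  rw [← coe_Wfinset, ← coe_Uplusfinset, Set.ncard_coe_finset, coe_Uplusfinset, hUplus]
  replace hedges := congrArg (Nat.cast : ℕ → ℝ) hedges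
  replace hdegrees := congrArg (Nat.cast : ℕ → ℝ) hdegrees
  simp only [Nat.cast_add, Nat.cast_sum, Nat.cast_mul, Nat.cast_ofNat] at hedges hdegrees
  linarith [sub_two_lt_sq_sub_self hlam]

/-- If `G` is connected with `m` edges and `λ(G) > (1 + √(4m-7))/2`, then
`e(W) < e(U₊) - |U₊| + 2`. -/
theorem stmt_11 {V : Type*} [Fintype V] [DecidableEq V] (G : SimpleGraph V)
    [DecidableRel G.Adj] (hconn : G.Connected)
    (m : ℕ) (hm : G.edgeSet.ncard = m)
    (x : V → ℝ) (hpos : ∀ v, 0 < x v) (hunit : ∑ v : V, x v ^ 2 = 1)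
    (heig : (SimpleGraph.adjMatrix ℝ G).mulVec x = specRad G • x)
    (ustar : V) (hmaxx : ∀ v, x v ≤ x ustar)
    (hlam : (1 + Real.sqrt (4 * (m : ℝ) - 7)) / 2 < specRad G) :
    (eIn G (Wset G ustar) : ℝ) <
      (eIn G (Uplusset G ustar) : ℝ) - ((Uplusset G ustar).ncard : ℝ) + 2 :=
  stmt_11_general G m hm x hpos heig ustar hmaxx hlam
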